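/- arXiv:1408.1849 — 2 statements merged into one kernel-verified Lean document; each statement's English description precedes it below -/
import Mathlib

section
/- Let X ∼ CO(μ; q) with pmf p. Then: (a) for every r ∈ ℤ the random variable Y = X + r, whose pmf is p_Y(j) = p(j − r), satisfies Y ∼ CO(μ + r; q_Y) with q_Y(j) = q(j − r); (b) the random variable W = −X, whose pmf is p_W(j) = p(−j), satisfies W ∼ CO(−μ; q_W) with q_W(j) = q(−j) − j − μ. -/
open scoped Classical

noncomputable section

/-- `p` is a probability mass function on `ℤ`. -/
def IsPMF (p : ℤ → ℝ) : Prop := (∀ j, 0 ≤ p j) ∧ HasSum p 1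

/-- The support `S(X) = {j : p j > 0}` of a pmf. -/
def supp (p : ℤ → ℝ) : Set ℤ := {j | 0 < p j}

/-- The cumulative sum `∑_{k ≤ j} (μ - k) p k`. -/
def cumul (p : ℤ → ℝ) (μ : ℝ) (j : ℤ) : ℝ :=
  ∑' k : {k : ℤ // k ≤ j}, (μ - (k.1 : ℝ)) * p k.1

/-- Expectation `E h(X) = ∑_j h j * p j`. -/
def Ex (p h : ℤ → ℝ) : ℝ := ∑' j : ℤ, h j * p j

/-- `E |X|^r < ∞`. -/
def FinAbsMoment (p : ℤ → ℝ) (r : ℕ) : Prop :=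
  Summable (fun j : ℤ => |(j : ℝ)| ^ r * p j)

/-- `X ∼ CO(μ; q)` for a general weight `q : ℤ → ℝ`:
`p` is a pmf with finite mean `μ` satisfying `∑_{k ≤ j}(μ-k)p k = q j * p j` for all `j`. -/
def COf (p : ℤ → ℝ) (μ : ℝ) (q : ℤ → ℝ) : Prop :=
  IsPMF p ∧ Summable (fun j : ℤ => |(j : ℝ)| * p j) ∧
    (∑' j : ℤ, (j : ℝ) * p j) = μ ∧ ∀ j : ℤ, cumul p μ j = q j * p j

/-- The real quadratic `δ x² + β x + γ`. -/
def quadR (δ β γ : ℝ) (x : ℝ) : ℝ := δ * x ^ 2 + β * x + γ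

/-- The quadratic on the integers. -/
def quad (δ β γ : ℝ) (j : ℤ) : ℝ := quadR δ β γ (j : ℝ)

/-- `X ∼ CO(μ; δ, β, γ)`, the cumulative Ord family. -/
def CO (p : ℤ → ℝ) (μ δ β γ : ℝ) : Prop := COf p μ (quad δ β γ)

/-- The `k`-th ascending power `f^{[k]}(j) = f(j) f(j+1) ⋯ f(j+k-1)`. -/
def ascPow (q : ℤ → ℝ) (k : ℕ) (j : ℤ) : ℝ := ∏ t ∈ Finset.range k, q (j + (t : ℤ))

/-- Forward difference `Δ f (j) = f (j+1) - f j`. -/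
def fwd (f : ℤ → ℝ) (j : ℤ) : ℝ := f (j + 1) - f j

/-- Iterated forward difference `Δ^k`. -/
def fwdIter (k : ℕ) (f : ℤ → ℝ) : ℤ → ℝ := fwd^[k] f

/-- Descending factorial `(x)_r = x (x-1) ⋯ (x-r+1)`. -/
def dFact (x : ℝ) (r : ℕ) : ℝ := ∏ t ∈ Finset.range r, (x - (t : ℝ))

/-- Ascending factorial `[x]_k = x (x+1) ⋯ (x+k-1)`. -/
def aFact (x : ℝ) (k : ℕ) : ℝ := ∏ t ∈ Finset.range k, (x + (t : ℝ))

/-- `m ≤ M(X) = |S(X)| - 1`, i.e. the support has at least `m+1` points. -/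
def SuppAtLeast (p : ℤ → ℝ) (m : ℕ) : Prop :=
  ∃ T : Finset ℤ, T.card = m + 1 ∧ ↑T ⊆ supp p

/-- Rodrigues polynomial `P_k(j) = (-1)^k Δ^k [q^{[k]}(j-k) p(j-k)] / p(j)`. -/
def RodP (p q : ℤ → ℝ) (k : ℕ) (j : ℤ) : ℝ :=
  ((-1 : ℝ) ^ k * fwdIter k (fun x => ascPow q k (x - (k : ℤ)) * p (x - (k : ℤ))) j) / p j

/-- `c_k(δ) = ∏_{j=k-1}^{2k-2} (1 - jδ)`. -/
def ckc (δ : ℝ) (k : ℕ) : ℝ := ∏ t ∈ Finset.range k, (1 - ((k - 1 + t : ℕ) : ℝ) * δ)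

/-- `A_k(μ; q) = E q^{[k]}(X)`. -/
def Ak (p q : ℤ → ℝ) (k : ℕ) : ℝ := Ex p (ascPow q k)

/-- The standardized Rodrigues polynomial `φ_k = P_k / (k! c_k(δ) A_k)^{1/2}`. -/
def phi (p q : ℤ → ℝ) (δ : ℝ) (k : ℕ) (j : ℤ) : ℝ :=
  RodP p q k j / Real.sqrt ((k.factorial : ℝ) * ckc δ k * Ak p q k)

/-- The pmf `p_i(j) = q^{[i]}(j) p(j) / E q^{[i]}(X)` of `X_i`. -/
def pmfI (p q : ℤ → ℝ) (i : ℕ) (j : ℤ) : ℝ := ascPow q i j * p j / Ak p q i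

/-- `μ_i = (δ i² + β i + μ)/(1 - 2iδ)`. -/
def muI (μ δ β : ℝ) (i : ℕ) : ℝ := (δ * (i : ℝ) ^ 2 + β * i + μ) / (1 - 2 * i * δ)

/-- `q_i(j) = q(j + i)/(1 - 2iδ)`. -/
def qI (δ β γ : ℝ) (i : ℕ) (j : ℤ) : ℝ :=
  quad δ β γ (j + (i : ℤ)) / (1 - 2 * (i : ℝ) * δ)

/-- `δ_i = δ/(1 - 2iδ)`, the leading coefficient of `q_i`. -/
def deltaI (δ : ℝ) (i : ℕ) : ℝ := δ / (1 - 2 * (i : ℝ) * δ)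

/-- Variance of `g(X)`. -/
def varOf (p g : ℤ → ℝ) : ℝ := Ex p (fun j => g j ^ 2) - (Ex p g) ^ 2

/-- `b_{j;k} = ∑_{i ≥ j} [j-i]_k a_i`. -/
def bSeq (a : ℤ → ℝ) (k : ℕ) (j : ℤ) : ℝ :=
  ∑' i : {i : ℤ // j ≤ i}, aFact ((j : ℝ) - (i.1 : ℝ)) k * a i.1

/-- Membership in the class `ℋ^{m,n}(X)`. -/
def inH (p q g : ℤ → ℝ) (m n : ℕ) : Prop :=
  Summable (fun j : ℤ => ascPow q n j * fwdIter n g j ^ 2 * p j) ∧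
  Summable (fun j : ℤ => ascPow q m j * |fwdIter m g j| * p j)

/-- The constant `κ_i`. -/
def kappa (p : ℤ → ℝ) (δ β γ : ℝ) (m n i : ℕ) : ℝ :=
  (m.choose i : ℝ) * (∏ t ∈ Finset.range n, (1 - ((m + i + t : ℕ) : ℝ) * δ)) /
    (dFact ((m : ℝ) + n) i * Ak p (quad δ β γ) i * ckc δ i *
      ∏ t ∈ Finset.range n, (1 - ((m + t : ℕ) : ℝ) * δ))

/-- The constant `ν_i`. -/
def nuC (δ : ℝ) (m n i : ℕ) : ℝ :=
  (n.choose i : ℝ) /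
    (dFact ((m : ℝ) + n) i * ∏ t ∈ Finset.range i, (1 - ((m + t : ℕ) : ℝ) * δ))

/-- The variance bound `S_{m,n}(g)`. -/
def Smn (p : ℤ → ℝ) (δ β γ : ℝ) (g : ℤ → ℝ) (m n : ℕ) : ℝ :=
  (∑ i ∈ Finset.Icc 1 m, kappa p δ β γ m n i *
      Ex p (fun j => ascPow (quad δ β γ) i j * fwdIter i g j) ^ 2) +
  ∑ i ∈ Finset.Icc 1 n, (-1 : ℝ) ^ (i - 1) * nuC δ m n i *
      Ex p (fun j => ascPow (quad δ β γ) i j * fwdIter i g j ^ 2)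

/-- `M(X)` when the support is finite. -/
def Mnum (p : ℤ → ℝ) : ℕ := (supp p).ncard - 1

/-- The constant `ζ_{m₁,m₂,n}`. -/
def zeta (p : ℤ → ℝ) (δ : ℝ) (m₁ m₂ n : ℕ) : ℝ :=
  if (supp p).Finite then
    (dFact ((m₂ : ℝ) + n) n * dFact ((Mnum p : ℝ) - m₁ - 1) n *
        (∏ t ∈ Finset.range n, (1 - ((m₂ + t : ℕ) : ℝ) * δ)) *
        ∏ t ∈ Finset.range n, (1 - ((m₁ + Mnum p + t : ℕ) : ℝ) * δ)) /
      (dFact ((m₁ : ℝ) + n) n * dFact ((Mnum p : ℝ) - m₂ - 1) n *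
        (∏ t ∈ Finset.range n, (1 - ((m₁ + t : ℕ) : ℝ) * δ)) *
        ∏ t ∈ Finset.range n, (1 - ((m₂ + Mnum p + t : ℕ) : ℝ) * δ))
  else
    (dFact ((m₂ : ℝ) + n) n * ∏ t ∈ Finset.range n, (1 - ((m₂ + t : ℕ) : ℝ) * δ)) /
      (dFact ((m₁ : ℝ) + n) n * ∏ t ∈ Finset.range n, (1 - ((m₁ + t : ℕ) : ℝ) * δ))

/-! Shifting `X` only reindexes the defining sums. Reflecting turns the cumulative sum of `-X`
up to `j` into minus the sum of the centred weights `(μ - k) p k` over `k ≥ -j`; as these weights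
sum to zero (the mean is `μ`), that equals the cumulative sum of `X` up to `-j - 1`, which the
Ord relation at `-j` expresses as `(q (-j) - μ - j) p (-j)`. -/

open Set

section IntervalSums

variable {α β : Type*} [AddCommGroup α] [UniformSpace α] [IsUniformAddGroup α] [CompleteSpace α]
  [T2Space α] [LinearOrder β] {f : β → α}

theorem Summable.tsum_Iic_eq_tsum_Iio_add (hf : Summable f) (m : β) :
    ∑' k : Iic m, f k = ∑' k : Iio m, f k + f m := by
  have hd : Disjoint (Iio m) {m} := disjoint_singleton_right.2 (lt_irrefl m)
  rw [← Iio_insert, insert_eq, union_comm,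
    (hf.subtype _).tsum_union_disjoint hd (hf.subtype _), tsum_singleton m f]

theorem Summable.tsum_Iio_add_tsum_Ici (hf : Summable f) (m : β) :
    ∑' k : Iio m, f k + ∑' k : Ici m, f k = ∑' k, f k := by
  rw [← compl_Iio]
  exact (hf.subtype _).tsum_add_tsum_compl (hf.subtype _)

end IntervalSums

theorem IsPMF.comp_equiv {p : ℤ → ℝ} (hp : IsPMF p) (e : ℤ ≃ ℤ) : IsPMF (p ∘ e) :=
  ⟨fun j => hp.1 (e j), e.hasSum_iff.mpr hp.2⟩

section Cumul

variable (p : ℤ → ℝ) (μ : ℝ)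

theorem cumul_eq_tsum_Iic (j : ℤ) : cumul p μ j = ∑' k : Iic j, (μ - k) * p k := rfl

theorem cumul_comp_sub (r j : ℤ) :
    cumul (fun k => p (k - r)) (μ + r) j = cumul p μ (j - r) := by
  rw [cumul_eq_tsum_Iic, cumul_eq_tsum_Iic, ← image_sub_const_Iic,
    tsum_image (fun k : ℤ => (μ - k) * p k) sub_left_injective.injOn]
  exact tsum_congr fun k => by push_cast; ring

theorem cumul_comp_neg (j : ℤ) :
    cumul (fun k => p (-k)) (-μ) j = -∑' k : Ici (-j), (μ - k) * p k := by
  rw [cumul_eq_tsum_Iic, ← image_neg_Iic,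
    tsum_image (fun k : ℤ => (μ - k) * p k) neg_injective.injOn, ← tsum_neg]
  exact tsum_congr fun k => by push_cast; ring

theorem cumul_comp_neg_of_hasSum_zero (hp : HasSum (fun k : ℤ => (μ - k) * p k) 0) (j : ℤ) :
    cumul (fun k => p (-k)) (-μ) j = cumul p μ (-j) - (μ + j) * p (-j) := by
  have hsplit := hp.summable.tsum_Iio_add_tsum_Ici (-j)
  rw [hp.tsum_eq] at hsplit
  rw [cumul_comp_neg, cumul_eq_tsum_Iic, hp.summable.tsum_Iic_eq_tsum_Iio_add]
  push_cast
  linear_combination -hsplit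

end Cumul

namespace COf

variable {p q : ℤ → ℝ} {μ : ℝ}

theorem summable_mul (h : COf p μ q) : Summable fun k : ℤ => (k : ℝ) * p k :=
  Summable.of_abs (h.2.1.congr fun k => by rw [abs_mul, abs_of_nonneg (h.1.1 k)])

theorem hasSum_centered (h : COf p μ q) : HasSum (fun k : ℤ => (μ - k) * p k) 0 := by
  have hdiff := (h.1.2.mul_left μ).sub h.summable_mul.hasSum
  rwa [h.2.2.1, mul_one, sub_self, ← funext fun k : ℤ => sub_mul μ (k : ℝ) (p k)] at hdiff

theorem comp_sub (h : COf p μ q) (r : ℤ) :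
    COf (fun j => p (j - r)) (μ + r) (fun j => q (j - r)) := by
  refine ⟨h.1.comp_equiv (Equiv.subRight r), ?_, ?_, fun j => ?_⟩
  · have hbound : Summable fun k : ℤ => |(k : ℝ)| * p k + |(r : ℝ)| * p k :=
      h.2.1.add (h.1.2.summable.mul_left _)
    refine (Equiv.addRight r).summable_iff (f := fun j : ℤ => |(j : ℝ)| * p (j - r)) |>.mp <|
      hbound.of_nonneg_of_le (fun k => mul_nonneg (abs_nonneg _) (h.1.1 _)) fun k => ?_
    simp only [Function.comp_apply, Equiv.coe_addRight, add_sub_cancel_right, Int.cast_add,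
      ← add_mul]
    exact mul_le_mul_of_nonneg_right (abs_add_le _ _) (h.1.1 k)
  · rw [← (Equiv.addRight r).tsum_eq]
    simp only [Equiv.coe_addRight, add_sub_cancel_right, Int.cast_add, add_mul]
    rw [h.summable_mul.tsum_add (h.1.2.summable.mul_left _), tsum_mul_left, h.2.2.1,
      h.1.2.tsum_eq, mul_one]
  · rw [cumul_comp_sub]
    exact h.2.2.2 (j - r)

theorem comp_neg (h : COf p μ q) :
    COf (fun j => p (-j)) (-μ) (fun j => q (-j) - j - μ) := by
  refine ⟨h.1.comp_equiv (Equiv.neg ℤ), ?_, ?_, fun j => ?_⟩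
  · refine (Equiv.neg ℤ).summable_iff (f := fun j : ℤ => |(j : ℝ)| * p (-j)) |>.mp <|
      h.2.1.congr fun k => ?_
    simp
  · rw [← (Equiv.neg ℤ).tsum_eq]
    simp only [Equiv.neg_apply, neg_neg, Int.cast_neg, neg_mul, tsum_neg, h.2.2.1]
  · rw [cumul_comp_neg_of_hasSum_zero p μ h.hasSum_centered, h.2.2.2]
    push_cast
    ring

end COf

theorem stmt1 (p : ℤ → ℝ) (μ δ β γ : ℝ) (h : CO p μ δ β γ) (r : ℤ) :
    COf (fun j => p (j - r)) (μ + r) (fun j => quad δ β γ (j - r)) ∧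
    COf (fun j => p (-j)) (-μ) (fun j => quad δ β γ (-j) - (j : ℝ) - μ) :=
  ⟨h.comp_sub r, h.comp_neg⟩
end
end

section
/- Let X be a discrete random variable with pmf p and finite mean. Then the following are equivalent: (a) X ∼ CO(μ; q) for some μ ∈ ℝ and some polynomial q of degree at most two; (b) (i) the support S of X is an integer chain S = {α, α+1, …, ω} with α ∈ ℤ ∪ {−∞}, ω ∈ ℤ ∪ {∞}, α ≤ ω; (ii) there exist a polynomial p₁ of degree at most one and a polynomial q of degree at most two such that [Δp(j−1)] q(j−1) = p₁(j) p(j) for all j ∈ S; (iii) for these polynomials there exists a constant μ such that p₁(j) + Δq(j−1) = μ − j for all j ∈ S, where additionally μ = E X in case ω < ∞. Moreover, in this case X ∼ CO(μ; q) with the μ and q of (b). -/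
open scoped Classical

noncomputable section

/-!
Write `C(j) = ∑_{k ≤ j} (μ - k) p(k)`. Since `C(j) - C(j-1) = (μ - j) p(j)`, the Ord relation
`C = q p` implies the recursion `q(j) p(j) - q(j-1) p(j-1) = (μ - j) p(j)`, which is (ii) + (iii);
the converse is a matter of boundary conditions.

If `C = q p` and `p(j) = 0`, then `C(j) = 0`. For `j < μ` this sum has nonnegative terms, and for
`j ≥ μ` so does `-C(j) = ∑_{k > j} (k - μ) p(k)` (the full sum is `μ - E X = 0`); so `p` vanishes
entirely below or entirely above `j`, i.e. the support is an integer chain.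

Conversely, the recursion makes `C - q p` constant along the support. At a finite left end `α`
it vanishes at `α - 1`; if `α = -∞`, then `C(j) → 0`, so `q(j) p(j)` has a limit as `j → -∞`,
and that limit is `0`: as `q(j) = O(j²)`, a nonzero limit would force `|j| p(j) ≳ 1 / |j|`,
contradicting the finite mean. The same argument at `+∞`, where `C(j) → μ - E X`, gives
`μ = E X` when `ω = ∞`. Off the support `C` is constant on the side away from it, hence equal to
its limit `0` there.
-/

open Filter Topology Asymptotics

theorem eq_of_forall_apply_eq_apply_sub_one {α : Type*} {f : ℤ → α} {i j : ℤ} (hij : i ≤ j)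
    (h : ∀ k, i < k → k ≤ j → f k = f (k - 1)) : f j = f i := by
  induction j, hij using Int.leInduction with
  | base => rfl
  | succ k hik ih =>
    rw [h (k + 1) (by omega) le_rfl, add_sub_cancel_right]
    exact ih fun l hil hlk => h l hil (by omega)

theorem eq_zero_of_tendsto_mul_of_isBigO_sq {f g : ℕ → ℝ}
    (hf : Summable fun n : ℕ => (n : ℝ) * f n) (hg : g =O[atTop] fun n => (n : ℝ) ^ 2) {c : ℝ}
    (h : Tendsto (fun n => g n * f n) atTop (𝓝 c)) : c = 0 := by
  by_contra hc
  have hlow : ∀ᶠ n in atTop, |c| / 2 ≤ ‖g n * f n‖ :=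
    h.norm.eventually (eventually_ge_nhds (half_lt_self (norm_pos_iff.2 hc)))
  have hone : (fun _ => (1 : ℝ)) =O[atTop] fun n : ℕ => (n : ℝ) ^ 2 * f n :=
    ((isBigO_const_left_iff_pos_le_norm one_ne_zero).2 ⟨|c| / 2, by positivity, hlow⟩).trans
      (hg.mul (isBigO_refl f atTop))
  refine Real.not_summable_one_div_natCast (summable_of_isBigO_nat hf ?_)
  refine ((isBigO_refl (fun n : ℕ => 1 / (n : ℝ)) atTop).mul hone).congr' (by simp) ?_
  filter_upwards [eventually_ne_atTop 0] with n hn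
  field_simp

theorem quad_isBigO_sq (δ β γ : ℝ) : quad δ β γ =O[cofinite] fun j : ℤ => (j : ℝ) ^ 2 := by
  refine IsBigO.of_bound (|δ| + |β| + |γ|) ?_
  filter_upwards [eventually_cofinite_ne 0] with j hj
  have h1 : 1 ≤ |(j : ℝ)| := by exact_mod_cast Int.one_le_abs hj
  have h2 : |(j : ℝ)| ≤ (j : ℝ) ^ 2 := by nlinarith [sq_abs (j : ℝ)]
  simp only [quad, quadR, Real.norm_eq_abs, abs_pow, sq_abs]
  calc |δ * (j : ℝ) ^ 2 + β * j + γ| ≤ |δ| * (j : ℝ) ^ 2 + |β| * |(j : ℝ)| + |γ| := by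
        refine (abs_add_le _ _).trans (add_le_add_left ((abs_add_le _ _).trans ?_) _)
        rw [abs_mul, abs_mul, abs_of_nonneg (sq_nonneg (j : ℝ))]
    _ ≤ (|δ| + |β| + |γ|) * (j : ℝ) ^ 2 := by
        nlinarith [abs_nonneg β, abs_nonneg γ, abs_nonneg δ]

theorem eq_zero_of_tendsto_mul_of_isBigO_sq_int {p q : ℤ → ℝ}
    (hmean : Summable fun j : ℤ => |(j : ℝ)| * p j) (hq : q =O[cofinite] fun j : ℤ => (j : ℝ) ^ 2)
    {l : Filter ℤ} (hl : l = atBot ∨ l = atTop) {c : ℝ}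
    (h : Tendsto (fun j => q j * p j) l (𝓝 c)) : c = 0 := by
  obtain ⟨e, he, habs, hel⟩ : ∃ e : ℕ → ℤ,
      Function.Injective e ∧ (∀ n, |(e n : ℝ)| = n) ∧ Tendsto e atTop l := by
    rcases hl with rfl | rfl
    · exact ⟨fun n => -n, neg_injective.comp Nat.cast_injective, fun n => by simp,
        tendsto_neg_atTop_atBot.comp tendsto_natCast_atTop_atTop⟩
    · exact ⟨Nat.cast, Nat.cast_injective, fun n => by simp, tendsto_natCast_atTop_atTop⟩
  have hqe : (fun n => q (e n)) =O[atTop] fun n : ℕ => (n : ℝ) ^ 2 := by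
    refine (hq.comp_tendsto (Nat.cofinite_eq_atTop ▸ he.tendsto_cofinite)).congr_right fun n => ?_
    rw [Function.comp_apply, ← sq_abs, habs]
  exact eq_zero_of_tendsto_mul_of_isBigO_sq (f := fun n => p (e n))
    ((hmean.comp_injective he).congr fun n => by simp [habs]) hqe (h.comp hel)

section Cumul

variable {p : ℤ → ℝ} {μ : ℝ}

theorem cumul_eq_tsum_indicator (p : ℤ → ℝ) (μ : ℝ) (j : ℤ) :
    cumul p μ j = ∑' k, (Set.Iic j).indicator (fun k : ℤ => (μ - k) * p k) k :=
  tsum_subtype (Set.Iic j) fun k : ℤ => (μ - k) * p k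

theorem cumul_sub_one_add (hF : Summable fun k : ℤ => (μ - k) * p k) (j : ℤ) :
    cumul p μ (j - 1) + (μ - j) * p j = cumul p μ j := by
  have hsplit : (Set.Iic j).indicator (fun k : ℤ => (μ - k) * p k)
      = (Set.Iic (j - 1)).indicator (fun k : ℤ => (μ - k) * p k) + Pi.single j ((μ - j) * p j) := by
    ext k
    rcases lt_trichotomy k j with hk | rfl | hk
    · simp [Set.indicator, hk.le, Int.le_sub_one_of_lt hk, hk.ne]
    · simp [Set.indicator]
    · simp [Set.indicator, not_le.2 hk, hk.ne', show ¬ k ≤ j - 1 by omega]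
  rw [cumul_eq_tsum_indicator, cumul_eq_tsum_indicator, hsplit]
  simp only [Pi.add_apply]
  rw [Summable.tsum_add (hF.indicator _) (hasSum_pi_single j _).summable, tsum_pi_single]

theorem cumul_eq_zero_of_forall_le {j : ℤ} (h : ∀ k ≤ j, p k = 0) : cumul p μ j = 0 := by
  simp [cumul, fun k : {k : ℤ // k ≤ j} => h k k.2]

theorem cumul_add_tsum_compl (hF : Summable fun k : ℤ => (μ - k) * p k) (j : ℤ) :
    cumul p μ j + ∑' k : ↥(Set.Iic j)ᶜ, (μ - k) * p k = ∑' k : ℤ, (μ - k) * p k :=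
  hF.tsum_subtype_add_tsum_subtype_compl (Set.Iic j)

theorem tendsto_cumul_atBot (hF : Summable fun k : ℤ => (μ - k) * p k) :
    Tendsto (cumul p μ) atBot (𝓝 0) := by
  have hpoint (k : ℤ) : Tendsto (fun j => (Set.Iic j).indicator (fun k : ℤ => (μ - k) * p k) k)
      atBot (𝓝 0) := by
    refine tendsto_const_nhds.congr' ?_
    filter_upwards [eventually_lt_atBot k] with j hj
    simp [Set.indicator, not_le.2 hj]
  simpa only [tsum_zero, ← cumul_eq_tsum_indicator] using tendsto_tsum_of_dominated_convergence
    hF.norm hpoint (Eventually.of_forall fun j k => norm_indicator_le_norm_self _ _)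

theorem tendsto_cumul_atTop (hF : Summable fun k : ℤ => (μ - k) * p k) :
    Tendsto (cumul p μ) atTop (𝓝 (∑' k : ℤ, (μ - k) * p k)) := by
  refine (tendsto_tsum_of_dominated_convergence hF.norm (fun k => ?_)
    (Eventually.of_forall fun j k => norm_indicator_le_norm_self _ _)).congr
    fun j => (cumul_eq_tsum_indicator p μ j).symm
  refine tendsto_const_nhds.congr' ?_
  filter_upwards [eventually_ge_atTop k] with j hj
  simp [Set.indicator, hj]

end Cumul

section PMF

variable {p : ℤ → ℝ} {μ : ℝ}

theorem IsPMF.eq_zero_of_notMem_supp (hp : IsPMF p) {j : ℤ} (hj : j ∉ supp p) : p j = 0 :=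
  le_antisymm (not_lt.1 hj) (hp.1 j)

theorem IsPMF.summable_mul (hp : IsPMF p) (hmean : Summable fun j : ℤ => |(j : ℝ)| * p j) :
    Summable fun j : ℤ => (j : ℝ) * p j :=
  Summable.of_abs (hmean.congr fun j => by rw [abs_mul, abs_of_nonneg (hp.1 j)])

theorem IsPMF.summable_sub_mul (hp : IsPMF p) (hmean : Summable fun j : ℤ => |(j : ℝ)| * p j)
    (μ : ℝ) : Summable fun j : ℤ => (μ - j) * p j := by
  simpa only [sub_mul] using (hp.2.summable.mul_left μ).sub (hp.summable_mul hmean)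

theorem IsPMF.tsum_sub_mul (hp : IsPMF p) (hmean : Summable fun j : ℤ => |(j : ℝ)| * p j)
    (μ : ℝ) : ∑' j : ℤ, (μ - j) * p j = μ - ∑' j : ℤ, (j : ℝ) * p j := by
  simp only [sub_mul]
  rw [(hp.2.summable.mul_left μ).tsum_sub (hp.summable_mul hmean), tsum_mul_left, hp.2.tsum_eq,
    mul_one]

theorem COf.ordConnected_supp {q : ℤ → ℝ} (h : COf p μ q) : (supp p).OrdConnected := by
  obtain ⟨hp, hmean, hmeanμ, hcumul⟩ := h
  have hF := hp.summable_sub_mul hmean μ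
  refine ⟨fun j₁ hj₁ j₂ hj₂ j ⟨h₁, h₂⟩ => ?_⟩
  by_contra hj
  have hcj : cumul p μ j = 0 := by rw [hcumul, hp.eq_zero_of_notMem_supp hj, mul_zero]
  rcases lt_or_ge (j : ℝ) μ with hlt | hle
  · have hpos : 0 < cumul p μ j := by
      refine (hF.subtype _).tsum_pos (fun k => mul_nonneg ?_ (hp.1 _)) ⟨j₁, h₁⟩
        (mul_pos ?_ hj₁)
      · have : ((k : ℤ) : ℝ) ≤ j := by exact_mod_cast k.2
        linarith
      · have : (j₁ : ℝ) ≤ j := by exact_mod_cast h₁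
        linarith
    linarith
  · have hjj₂ : j < j₂ := lt_of_le_of_ne h₂ (by rintro rfl; exact hj hj₂)
    have hneg : 0 < ∑' k : ↥(Set.Iic j)ᶜ, (k - μ) * p k := by
      refine ((hF.neg.subtype _).congr fun k => by simp only [Function.comp_apply]; ring).tsum_pos
        (fun k => mul_nonneg ?_ (hp.1 _)) ⟨j₂, not_le.2 hjj₂⟩ (mul_pos ?_ hj₂)
      · have : (j : ℝ) < ((k : ℤ) : ℝ) := by exact_mod_cast Set.notMem_Iic.1 k.2
        linarith
      · have : (j : ℝ) < j₂ := by exact_mod_cast hjj₂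
        linarith
    have htotal := cumul_add_tsum_compl hF j
    rw [hp.tsum_sub_mul hmean, hmeanμ, sub_self, hcj, zero_add] at htotal
    have hflip : ∑' k : ↥(Set.Iic j)ᶜ, (k - μ) * p k = -∑' k : ↥(Set.Iic j)ᶜ, (μ - k) * p k := by
      rw [← tsum_neg]
      simp only [← neg_mul, neg_sub]
    linarith

theorem COf.mul_sub_mul_sub_one {q : ℤ → ℝ} (h : COf p μ q) (j : ℤ) :
    q j * p j - q (j - 1) * p (j - 1) = (μ - j) * p j := by
  rw [← h.2.2.2, ← h.2.2.2, ← cumul_sub_one_add (h.1.summable_sub_mul h.2.1 μ)]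
  ring

end PMF

section Converse

variable {p q : ℤ → ℝ} {μ : ℝ}

theorem cumul_eq_mul_of_mem_supp (hp : IsPMF p) (hmean : Summable fun j : ℤ => |(j : ℝ)| * p j)
    (hq : q =O[cofinite] fun j : ℤ => (j : ℝ) ^ 2) (hS : (supp p).OrdConnected)
    (hdiff : ∀ j ∈ supp p, q j * p j - q (j - 1) * p (j - 1) = (μ - j) * p j) :
    ∀ j ∈ supp p, cumul p μ j = q j * p j := by
  have hF := hp.summable_sub_mul hmean μ
  set D : ℤ → ℝ := fun k => cumul p μ k - q k * p k with hDdef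
  have hD : ∀ k ∈ supp p, D k = D (k - 1) := fun k hk => by
    simp only [hDdef]
    linarith [cumul_sub_one_add hF k, hdiff k hk]
  intro j hj
  suffices D j = 0 from sub_eq_zero.1 this
  by_cases hbdd : BddBelow (supp p)
  · have hα : sInf (supp p) ∈ supp p := Int.csInf_mem ⟨j, hj⟩ hbdd
    have hbelow : ∀ k ≤ sInf (supp p) - 1, p k = 0 := fun k hk =>
      hp.eq_zero_of_notMem_supp fun hk' => by linarith [csInf_le hbdd hk']
    rw [eq_of_forall_apply_eq_apply_sub_one (i := sInf (supp p) - 1)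
      (by linarith [csInf_le hbdd hj]) fun k hk hkj => hD k (hS.out hα hj ⟨by omega, hkj⟩)]
    simp [hDdef, cumul_eq_zero_of_forall_le hbelow, hbelow _ le_rfl]
  · have hall : ∀ k ≤ j, k ∈ supp p := fun k hk => by
      obtain ⟨i, hi, hik⟩ := not_bddBelow_iff.1 hbdd k
      exact hS.out hi hj ⟨hik.le, hk⟩
    have hlim : Tendsto (fun k => q k * p k) atBot (𝓝 (0 - D j)) := by
      refine ((tendsto_cumul_atBot hF).sub_const (D j)).congr' ?_
      filter_upwards [eventually_le_atBot j] with k hk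
      rw [eq_of_forall_apply_eq_apply_sub_one hk fun i _ hi => hD i (hall i hi)]
      simp [hDdef]
    simpa using eq_zero_of_tendsto_mul_of_isBigO_sq_int hmean hq (Or.inl rfl) hlim

theorem tsum_mul_eq_of_not_bddAbove (hp : IsPMF p)
    (hmean : Summable fun j : ℤ => |(j : ℝ)| * p j) (hq : q =O[cofinite] fun j : ℤ => (j : ℝ) ^ 2)
    (hS : (supp p).OrdConnected) (hcumul : ∀ j ∈ supp p, cumul p μ j = q j * p j)
    (hbdd : ¬BddAbove (supp p)) : ∑' j : ℤ, (j : ℝ) * p j = μ := by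
  obtain ⟨j₀, hj₀, -⟩ := not_bddAbove_iff.1 hbdd 0
  have hlim : Tendsto (fun k => q k * p k) atTop (𝓝 (μ - ∑' j : ℤ, (j : ℝ) * p j)) := by
    rw [← hp.tsum_sub_mul hmean]
    refine (tendsto_cumul_atTop (hp.summable_sub_mul hmean μ)).congr' ?_
    filter_upwards [eventually_ge_atTop j₀] with k hk
    obtain ⟨i, hi, hki⟩ := not_bddAbove_iff.1 hbdd k
    exact hcumul k (hS.out hj₀ hi ⟨hk, hki.le⟩)
  linarith [eq_zero_of_tendsto_mul_of_isBigO_sq_int hmean hq (Or.inr rfl) hlim]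

theorem cumul_eq_zero_of_notMem_supp (hp : IsPMF p)
    (hmean : Summable fun j : ℤ => |(j : ℝ)| * p j) (hμ : ∑' j : ℤ, (j : ℝ) * p j = μ)
    (hS : (supp p).OrdConnected) {j : ℤ} (hj : j ∉ supp p) : cumul p μ j = 0 := by
  by_cases hlow : ∀ k ≤ j, p k = 0
  · exact cumul_eq_zero_of_forall_le hlow
  push Not at hlow
  obtain ⟨a, haj, hpa⟩ := hlow
  have ha : a ∈ supp p := lt_of_le_of_ne (hp.1 a) hpa.symm
  have hF := hp.summable_sub_mul hmean μ
  have habove : ∀ k > j, p k = 0 := fun k hk =>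
    hp.eq_zero_of_notMem_supp fun hk' => hj (hS.out ha hk' ⟨haj, hk.le⟩)
  have hconst : ∀ k ≥ j, cumul p μ k = cumul p μ j := fun k hk =>
    eq_of_forall_apply_eq_apply_sub_one hk fun i hji _ => by
      rw [← cumul_sub_one_add hF i, habove i hji, mul_zero, add_zero]
  have hlim := tendsto_cumul_atTop hF
  rw [hp.tsum_sub_mul hmean, hμ, sub_self] at hlim
  refine tendsto_nhds_unique (tendsto_const_nhds.congr' ?_) hlim
  filter_upwards [eventually_ge_atTop j] with k hk
  exact (hconst k hk).symm

theorem COf.of_ordConnected (hp : IsPMF p) (hmean : Summable fun j : ℤ => |(j : ℝ)| * p j)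
    (hq : q =O[cofinite] fun j : ℤ => (j : ℝ) ^ 2) (hS : (supp p).OrdConnected)
    (hdiff : ∀ j ∈ supp p, q j * p j - q (j - 1) * p (j - 1) = (μ - j) * p j)
    (hbdd : BddAbove (supp p) → μ = ∑' j : ℤ, (j : ℝ) * p j) : COf p μ q := by
  have hcumul := cumul_eq_mul_of_mem_supp hp hmean hq hS hdiff
  have hμ : ∑' j : ℤ, (j : ℝ) * p j = μ := by
    by_cases h : BddAbove (supp p)
    · exact (hbdd h).symm
    · exact tsum_mul_eq_of_not_bddAbove hp hmean hq hS hcumul h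
  refine ⟨hp, hmean, hμ, fun j => ?_⟩
  by_cases hj : j ∈ supp p
  · exact hcumul j hj
  · rw [cumul_eq_zero_of_notMem_supp hp hmean hμ hS hj, hp.eq_zero_of_notMem_supp hj, mul_zero]

end Converse

theorem quad_sub_quad_sub_one (δ β γ : ℝ) (j : ℤ) :
    quad δ β γ j - quad δ β γ (j - 1) = δ * (2 * j - 1) + β := by
  simp only [quad, quadR]
  push_cast
  ring

theorem stmt3 (p : ℤ → ℝ) (hp : IsPMF p)
    (hmean : Summable (fun j : ℤ => |(j : ℝ)| * p j)) :
    ((∃ μ δ β γ : ℝ, CO p μ δ β γ) ↔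
      ((∀ j₁ j₂ j : ℤ, j₁ ∈ supp p → j₂ ∈ supp p → j₁ ≤ j → j ≤ j₂ → j ∈ supp p) ∧
        ∃ a b δ β γ μ : ℝ,
          (∀ j ∈ supp p, (p j - p (j - 1)) * quad δ β γ (j - 1) = (a + b * j) * p j) ∧
          (∀ j ∈ supp p,
            (a + b * j) + (quad δ β γ j - quad δ β γ (j - 1)) = μ - j) ∧
          ((∃ ω : ℤ, ∀ j ∈ supp p, j ≤ ω) → μ = ∑' j : ℤ, (j : ℝ) * p j))) ∧
    (∀ a b δ β γ μ : ℝ,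
      (∀ j₁ j₂ j : ℤ, j₁ ∈ supp p → j₂ ∈ supp p → j₁ ≤ j → j ≤ j₂ → j ∈ supp p) →
      (∀ j ∈ supp p, (p j - p (j - 1)) * quad δ β γ (j - 1) = (a + b * j) * p j) →
      (∀ j ∈ supp p, (a + b * j) + (quad δ β γ j - quad δ β γ (j - 1)) = μ - j) →
      ((∃ ω : ℤ, ∀ j ∈ supp p, j ≤ ω) → μ = ∑' j : ℤ, (j : ℝ) * p j) →
      CO p μ δ β γ) := by
  have hchain_iff : (∀ j₁ j₂ j : ℤ, j₁ ∈ supp p → j₂ ∈ supp p → j₁ ≤ j → j ≤ j₂ → j ∈ supp p) ↔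
      (supp p).OrdConnected :=
    ⟨fun h => ⟨fun j₁ h₁ j₂ h₂ j hj => h j₁ j₂ j h₁ h₂ hj.1 hj.2⟩,
      fun h j₁ j₂ j h₁ h₂ hj₁ hj₂ => h.out h₁ h₂ ⟨hj₁, hj₂⟩⟩
  have converse : ∀ a b δ β γ μ : ℝ,
      (∀ j₁ j₂ j : ℤ, j₁ ∈ supp p → j₂ ∈ supp p → j₁ ≤ j → j ≤ j₂ → j ∈ supp p) →
      (∀ j ∈ supp p, (p j - p (j - 1)) * quad δ β γ (j - 1) = (a + b * j) * p j) →
      (∀ j ∈ supp p, (a + b * j) + (quad δ β γ j - quad δ β γ (j - 1)) = μ - j) →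
      ((∃ ω : ℤ, ∀ j ∈ supp p, j ≤ ω) → μ = ∑' j : ℤ, (j : ℝ) * p j) →
      CO p μ δ β γ := fun a b δ β γ μ hS hii hiii hμ =>
    COf.of_ordConnected hp hmean (quad_isBigO_sq δ β γ) (hchain_iff.1 hS)
      (fun j hj => by linear_combination hii j hj + p j * hiii j hj) (hμ ∘ bddAbove_def.1)
  refine ⟨⟨?_, fun ⟨hS, a, b, δ, β, γ, μ, hii, hiii, hμ⟩ =>
    ⟨μ, δ, β, γ, converse a b δ β γ μ hS hii hiii hμ⟩⟩, converse⟩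
  rintro ⟨μ, δ, β, γ, h⟩
  refine ⟨hchain_iff.2 h.ordConnected_supp, μ + δ - β, -(1 + 2 * δ), δ, β, γ, μ,
    fun j _ => ?_, fun j _ => ?_, fun _ => h.2.2.1.symm⟩
  · linear_combination h.mul_sub_mul_sub_one j - p j * quad_sub_quad_sub_one δ β γ j
  · linear_combination quad_sub_quad_sub_one δ β γ j
end
end
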